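/- Let (A,C)_ψ be an entwining structure with A finitely generated projective over k and φ : A* ⊗ C → A a normalised cointegral map. For entwined modules M, N and a right C-comodule map g : M → N, the map g̃(m) = Σᵢ g(m₍₀₎·aᵢ)·φ(aᵢ* ⊗ m₍₁₎) is a morphism of entwined modules (both A-linear and C-colinear). -/

import Mathlib

open TensorProduct LinearMap

noncomputable section

variable (k A C : Type*) [CommRing k] [Ring A] [Algebra k A]
  [AddCommGroup C] [Module k C] [Coalgebra k C]

/-- An entwining structure `(A,C)_ψ` over `k`. -/
structure Entwining where
  psi : C ⊗[k] A →ₗ[k] A ⊗[k] C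
  mul_compat :
    psi ∘ₗ lTensor C (LinearMap.mul' k A)
      = rTensor C (LinearMap.mul' k A)
        ∘ₗ (TensorProduct.assoc k A A C).symm.toLinearMap
        ∘ₗ lTensor A psi
        ∘ₗ (TensorProduct.assoc k A C A).toLinearMap
        ∘ₗ rTensor A psi
        ∘ₗ (TensorProduct.assoc k C A A).symm.toLinearMap
  one_compat : ∀ c : C, psi (c ⊗ₜ[k] (1 : A)) = (1 : A) ⊗ₜ[k] c
  comul_compat :
    lTensor A (Coalgebra.comul (R := k) (A := C)) ∘ₗ psi
      = (TensorProduct.assoc k A C C).toLinearMap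
        ∘ₗ rTensor C psi
        ∘ₗ (TensorProduct.assoc k C A C).symm.toLinearMap
        ∘ₗ lTensor C psi
        ∘ₗ (TensorProduct.assoc k C C A).toLinearMap
        ∘ₗ rTensor A (Coalgebra.comul (R := k) (A := C))
  counit_compat : ∀ (c : C) (a : A),
    (TensorProduct.rid k A)
        ((lTensor A (Coalgebra.counit (R := k) (A := C))) (psi (c ⊗ₜ[k] a)))
      = Coalgebra.counit (R := k) c • a

variable {k A C} in
/-- `act` is a unital associative right `A`-action on `M`. -/
def IsRAction {M : Type*} [AddCommGroup M] [Module k M]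
    (act : M ⊗[k] A →ₗ[k] M) : Prop :=
  (∀ m : M, act (m ⊗ₜ[k] (1 : A)) = m) ∧
  act ∘ₗ lTensor M (LinearMap.mul' k A)
    = act ∘ₗ rTensor A act ∘ₗ (TensorProduct.assoc k M A A).symm.toLinearMap

variable {k A C} in
/-- `coact` is a counital coassociative right `C`-coaction on `M`. -/
def IsRCoaction {M : Type*} [AddCommGroup M] [Module k M]
    (coact : M →ₗ[k] M ⊗[k] C) : Prop :=
  (∀ m : M, (TensorProduct.rid k M)
      ((lTensor M (Coalgebra.counit (R := k) (A := C))) (coact m)) = m) ∧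
  rTensor C coact ∘ₗ coact
    = (TensorProduct.assoc k M C C).symm.toLinearMap
      ∘ₗ lTensor M (Coalgebra.comul (R := k) (A := C)) ∘ₗ coact

variable {k A C} in
/-- The compatibility condition making `(M, act, coact)` an entwined
`(A,C)_ψ`-module: `ρ^M(m·a) = m₍₀₎·a_α ⊗ m₍₁₎^α`. -/
def IsEntwinedModule (E : Entwining k A C) {M : Type*} [AddCommGroup M] [Module k M]
    (act : M ⊗[k] A →ₗ[k] M) (coact : M →ₗ[k] M ⊗[k] C) : Prop :=
  IsRAction act ∧ IsRCoaction coact ∧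
  coact ∘ₗ act
    = rTensor C act
      ∘ₗ (TensorProduct.assoc k M A C).symm.toLinearMap
      ∘ₗ lTensor M E.psi
      ∘ₗ (TensorProduct.assoc k M C A).toLinearMap
      ∘ₗ rTensor A coact

variable {k A C} in
/-- A morphism of entwined modules: right `A`-linear and right `C`-colinear. -/
def IsEntwinedHom {M N : Type*} [AddCommGroup M] [Module k M]
    [AddCommGroup N] [Module k N]
    (actM : M ⊗[k] A →ₗ[k] M) (coactM : M →ₗ[k] M ⊗[k] C)
    (actN : N ⊗[k] A →ₗ[k] N) (coactN : N →ₗ[k] N ⊗[k] C)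
    (f : M →ₗ[k] N) : Prop :=
  (f ∘ₗ actM = actN ∘ₗ rTensor A f) ∧ (coactN ∘ₗ f = rTensor C f ∘ₗ coactM)

variable {k A C} in
/-- `ψ( - ⊗ a₀) : C →ₗ A ⊗ C`. -/
def psiAt (E : Entwining k A C) (a₀ : A) : C →ₗ[k] A ⊗[k] C :=
  E.psi ∘ₗ ((TensorProduct.mk k C A).flip a₀)

variable {k A C} in
/-- `φ(ξ₀ ⊗ -) : C →ₗ A` for a cointegral-type map `φ : A* ⊗ C → A`. -/
def cointAt (φc : Module.Dual k A ⊗[k] C →ₗ[k] A) (ξ₀ : Module.Dual k A) :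
    C →ₗ[k] A :=
  φc ∘ₗ (TensorProduct.mk k (Module.Dual k A) C ξ₀)

variable {k A C} in
/-- `φ : A* ⊗ C → A` is a normalised cointegral map in `(A,C)_ψ`
(Definition 4.6), relative to a finite dual basis `{aᵢ, aᵢ*}` of `A`
(so that `coev_A(1) = Σᵢ aᵢ ⊗ aᵢ*`). -/
def IsNormalisedCointegralMap (E : Entwining k A C) (n : ℕ)
    (aB : Fin n → A) (aD : Fin n → Module.Dual k A)
    (φc : Module.Dual k A ⊗[k] C →ₗ[k] A) : Prop :=
  -- (1) `(A⊗ψ)∘(ψ⊗φ)∘(C⊗coev_A⊗C)∘Δ = (A⊗φ⊗C)∘(coev_A⊗Δ)`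
  (∀ c : C,
    ∑ i, (lTensor A E.psi)
        ((TensorProduct.assoc k A C A)
          ((TensorProduct.map (psiAt E (aB i)) (cointAt φc (aD i)))
            (Coalgebra.comul (R := k) c)))
      = ∑ i, (aB i) ⊗ₜ[k]
          ((rTensor C (cointAt φc (aD i))) (Coalgebra.comul (R := k) c))) ∧
  -- (2) `(A⊗μ)∘(A⊗φ⊗A)∘(coev_A⊗C⊗A) = (μ⊗φ)∘(A⊗coev_A⊗C)∘ψ`
  (∀ (c : C) (a : A),
    (∑ i, (aB i) ⊗ₜ[k] (φc ((aD i) ⊗ₜ[k] c) * a))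
      = (∑ i, TensorProduct.map (LinearMap.mulRight k (aB i))
            (cointAt φc (aD i)))
          (E.psi (c ⊗ₜ[k] a))) ∧
  -- (3) `μ∘(A⊗φ)∘(coev_A⊗C) = 1_A ∘ ε`
  (∀ c : C,
    ∑ i, (aB i) * φc ((aD i) ⊗ₜ[k] c)
      = (Coalgebra.counit (R := k) c) • (1 : A))

variable {k A C} in
/-- The averaged map `g̃(m) = Σᵢ g(m₍₀₎·aᵢ) · φ(aᵢ* ⊗ m₍₁₎)` (Lemma 4.8). -/
def cointAvg (n : ℕ) (aB : Fin n → A) (aD : Fin n → Module.Dual k A)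
    (φc : Module.Dual k A ⊗[k] C →ₗ[k] A)
    {M N : Type*} [AddCommGroup M] [Module k M] [AddCommGroup N] [Module k N]
    (actM : M ⊗[k] A →ₗ[k] M) (coactM : M →ₗ[k] M ⊗[k] C)
    (actN : N ⊗[k] A →ₗ[k] N) (g : M →ₗ[k] N) : M →ₗ[k] N :=
  actN
  ∘ₗ (∑ i, TensorProduct.map
        (g ∘ₗ actM ∘ₗ ((TensorProduct.mk k M A).flip (aB i)))
        (cointAt φc (aD i)))
  ∘ₗ coactM

/-
Write `g̃ = G ∘ ρ^M` with `G (m ⊗ c) = Σᵢ g(m·aᵢ)·φ(aᵢ* ⊗ c)`, and let `M ⊗ C` carry the twisted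
action `(m ⊗ c)·a = m·a_α ⊗ c^α`, for which `ρ^M` is `A`-linear by the entwining condition.
Condition (2) on `φ` says precisely that `G` is `A`-linear for this action, so `g̃` is `A`-linear.
For colinearity, `ρ^N ∘ G = G' ∘ (ρ^M ⊗ C)`, where `G'` is the same average formed for
`g ⊗ C : M ⊗ C → N ⊗ C` and the twisted actions. By coassociativity `G'` is only evaluated on
`(M ⊗ Δ) ρ^M (m)`, and there condition (1) moves both occurrences of `ψ` past `φ`, turning `G'`
into `G ⊗ C`.
-/

section Averaging

variable {k A C : Type*} [CommRing k] [Ring A] [Algebra k A]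
  [AddCommGroup C] [Module k C]
  {M N P : Type*} [AddCommGroup M] [Module k M] [AddCommGroup N] [Module k N]
  [AddCommGroup P] [Module k P]

theorem rTensor_assoc_symm_tmul (f : M ⊗[k] A →ₗ[k] P) (m : M) (τ : A ⊗[k] C) :
    rTensor C f ((TensorProduct.assoc k M A C).symm (m ⊗ₜ τ))
      = rTensor C (f ∘ₗ TensorProduct.mk k M A m) τ := by
  induction τ using TensorProduct.induction_on with
  | zero => simp
  | tmul a c => simp
  | add σ τ hσ hτ => simp only [tmul_add, map_add, hσ, hτ]

theorem IsRAction.act_act {act : M ⊗[k] A →ₗ[k] M} (h : IsRAction act) (m : M) (a b : A) :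
    act (act (m ⊗ₜ a) ⊗ₜ b) = act (m ⊗ₜ (a * b)) := by
  simpa using (LinearMap.congr_fun h.2 (m ⊗ₜ[k] (a ⊗ₜ[k] b))).symm

variable (n : ℕ) (aB : Fin n → A) (aD : Fin n → Module.Dual k A)
  (φc : Module.Dual k A ⊗[k] C →ₗ[k] A)

def cointAvgOnTensor (actM : M ⊗[k] A →ₗ[k] M) (actN : N ⊗[k] A →ₗ[k] N) (g : M →ₗ[k] N) :
    M ⊗[k] C →ₗ[k] N :=
  actN ∘ₗ ∑ i, TensorProduct.map (g ∘ₗ actM ∘ₗ (TensorProduct.mk k M A).flip (aB i))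
    (cointAt φc (aD i))

theorem cointAvg_eq_comp (actM : M ⊗[k] A →ₗ[k] M) (coactM : M →ₗ[k] M ⊗[k] C)
    (actN : N ⊗[k] A →ₗ[k] N) (g : M →ₗ[k] N) :
    cointAvg n aB aD φc actM coactM actN g = cointAvgOnTensor n aB aD φc actM actN g ∘ₗ coactM :=
  rfl

variable {n aB aD φc}

theorem cointAvgOnTensor_tmul (actM : M ⊗[k] A →ₗ[k] M) (actN : N ⊗[k] A →ₗ[k] N)
    (g : M →ₗ[k] N) (m : M) (c : C) :
    cointAvgOnTensor n aB aD φc actM actN g (m ⊗ₜ c)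
      = ∑ i, actN (g (actM (m ⊗ₜ aB i)) ⊗ₜ φc (aD i ⊗ₜ c)) := by
  simp [cointAvgOnTensor, cointAt]

theorem cointAvgOnTensor_naturality {M' N' : Type*} [AddCommGroup M'] [Module k M']
    [AddCommGroup N'] [Module k N'] {actM : M ⊗[k] A →ₗ[k] M} {actN : N ⊗[k] A →ₗ[k] N}
    {actM' : M' ⊗[k] A →ₗ[k] M'} {actN' : N' ⊗[k] A →ₗ[k] N'} {g : M →ₗ[k] N} {g' : M' →ₗ[k] N'}
    {fM : M →ₗ[k] M'} {fN : N →ₗ[k] N'} (hfM : fM ∘ₗ actM = actM' ∘ₗ rTensor A fM)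
    (hfN : fN ∘ₗ actN = actN' ∘ₗ rTensor A fN) (hg : g' ∘ₗ fM = fN ∘ₗ g) :
    fN ∘ₗ cointAvgOnTensor n aB aD φc actM actN g
      = cointAvgOnTensor n aB aD φc actM' actN' g' ∘ₗ rTensor C fM := by
  refine TensorProduct.ext' fun m c => ?_
  simp only [coe_comp, Function.comp_apply, cointAvgOnTensor_tmul, rTensor_tmul, map_sum]
  refine Finset.sum_congr rfl fun i _ => ?_
  have hfM' := LinearMap.congr_fun hfM (m ⊗ₜ aB i)
  have hfN' := LinearMap.congr_fun hfN (g (actM (m ⊗ₜ aB i)) ⊗ₜ φc (aD i ⊗ₜ c))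
  have hg' := LinearMap.congr_fun hg (actM (m ⊗ₜ aB i))
  simp only [coe_comp, Function.comp_apply, rTensor_tmul] at hfM' hfN' hg'
  rw [hfN', ← hg', hfM']

theorem rTensor_cointAvgOnTensor_comp_assoc_symm_mk (actM : M ⊗[k] A →ₗ[k] M)
    (actN : N ⊗[k] A →ₗ[k] N) (g : M →ₗ[k] N) (m : M) :
    rTensor C (cointAvgOnTensor n aB aD φc actM actN g)
        ∘ₗ (TensorProduct.assoc k M C C).symm.toLinearMap ∘ₗ TensorProduct.mk k M (C ⊗[k] C) m
      = ∑ i, rTensor C (actN ∘ₗ rTensor A (g ∘ₗ actM ∘ₗ TensorProduct.mk k M A m))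
          ∘ₗ (TensorProduct.assoc k A A C).symm.toLinearMap
          ∘ₗ TensorProduct.mk k A (A ⊗[k] C) (aB i) ∘ₗ rTensor C (cointAt φc (aD i)) := by
  refine TensorProduct.ext' fun c₁ c₂ => ?_
  simp [cointAvgOnTensor_tmul, cointAt, sum_tmul]

variable [Coalgebra k C]

/-- `(m ⊗ c) ⊗ a ↦ act (m ⊗ a_α) ⊗ c^α`. -/
def twistedAct (E : Entwining k A C) (act : M ⊗[k] A →ₗ[k] P) :
    (M ⊗[k] C) ⊗[k] A →ₗ[k] P ⊗[k] C :=
  rTensor C act ∘ₗ (TensorProduct.assoc k M A C).symm.toLinearMap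
    ∘ₗ lTensor M E.psi ∘ₗ (TensorProduct.assoc k M C A).toLinearMap

theorem twistedAct_tmul (E : Entwining k A C) (act : M ⊗[k] A →ₗ[k] P) (m : M) (c : C)
    (a : A) :
    twistedAct E act ((m ⊗ₜ c) ⊗ₜ a)
      = rTensor C (act ∘ₗ TensorProduct.mk k M A m) (E.psi (c ⊗ₜ a)) := by
  simp [twistedAct, rTensor_assoc_symm_tmul]

theorem twistedAct_comp_rTensor (E : Entwining k A C) (act : N ⊗[k] A →ₗ[k] P)
    (h : M →ₗ[k] N) :
    twistedAct E act ∘ₗ rTensor A (rTensor C h) = twistedAct E (act ∘ₗ rTensor A h) := by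
  refine TensorProduct.ext_threefold fun m c a => ?_
  simp only [coe_comp, Function.comp_apply, rTensor_tmul, twistedAct_tmul]
  congr 2

theorem IsEntwinedModule.coact_comp_act {E : Entwining k A C} {act : M ⊗[k] A →ₗ[k] M}
    {coact : M →ₗ[k] M ⊗[k] C} (h : IsEntwinedModule E act coact) :
    coact ∘ₗ act = twistedAct E act ∘ₗ rTensor A coact :=
  h.2.2

theorem cointAvgOnTensor_comp_twistedAct (E : Entwining k A C) {actM : M ⊗[k] A →ₗ[k] M}
    {actN : N ⊗[k] A →ₗ[k] N} (hM : IsRAction actM) (hN : IsRAction actN) (g : M →ₗ[k] N)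
    (hφ : ∀ (c : C) (a : A), ∑ i, aB i ⊗ₜ[k] (φc (aD i ⊗ₜ[k] c) * a)
      = (∑ i, TensorProduct.map (mulRight k (aB i)) (cointAt φc (aD i))) (E.psi (c ⊗ₜ[k] a))) :
    cointAvgOnTensor n aB aD φc actM actN g ∘ₗ twistedAct E actM
      = actN ∘ₗ rTensor A (cointAvgOnTensor n aB aD φc actM actN g) := by
  have hG (m : M) :
      cointAvgOnTensor n aB aD φc actM actN g ∘ₗ rTensor C (actM ∘ₗ TensorProduct.mk k M A m)
        = actN ∘ₗ rTensor A (g ∘ₗ actM ∘ₗ TensorProduct.mk k M A m)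
          ∘ₗ ∑ i, TensorProduct.map (mulRight k (aB i)) (cointAt φc (aD i)) := by
    refine TensorProduct.ext' fun a c => ?_
    simp [cointAvgOnTensor_tmul, cointAt, hM.act_act]
  refine TensorProduct.ext_threefold fun m c a => ?_
  have hGψ := LinearMap.congr_fun (hG m) (E.psi (c ⊗ₜ a))
  simp only [coe_comp, Function.comp_apply] at hGψ
  simp only [coe_comp, Function.comp_apply, twistedAct_tmul, hGψ, ← hφ, rTensor_tmul,
    cointAvgOnTensor_tmul, map_sum, sum_tmul, hN.act_act]
  rfl

theorem cointAvgOnTensor_twistedAct_comp_assoc_symm_mk (E : Entwining k A C)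
    (actM : M ⊗[k] A →ₗ[k] M) (actN : N ⊗[k] A →ₗ[k] N) (g : M →ₗ[k] N) (m : M) :
    cointAvgOnTensor n aB aD φc (twistedAct E actM) (twistedAct E actN) (rTensor C g)
        ∘ₗ (TensorProduct.assoc k M C C).symm.toLinearMap ∘ₗ TensorProduct.mk k M (C ⊗[k] C) m
      = ∑ i, twistedAct E (actN ∘ₗ rTensor A (g ∘ₗ actM ∘ₗ TensorProduct.mk k M A m))
          ∘ₗ TensorProduct.map (psiAt E (aB i)) (cointAt φc (aD i)) := by
  refine TensorProduct.ext' fun c₁ c₂ => ?_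
  simp only [coe_comp, Function.comp_apply, LinearMap.sum_apply, LinearEquiv.coe_coe,
    TensorProduct.mk_apply, TensorProduct.assoc_symm_tmul, cointAvgOnTensor_tmul, twistedAct_tmul,
    ← rTensor_comp_apply, map_tmul, psiAt]
  refine Finset.sum_congr rfl fun i _ => ?_
  rw [← twistedAct_comp_rTensor]
  rfl

theorem cointAvgOnTensor_twistedAct_comp_comul (E : Entwining k A C)
    (hφ : ∀ c : C, ∑ i, lTensor A E.psi ((TensorProduct.assoc k A C A)
        (TensorProduct.map (psiAt E (aB i)) (cointAt φc (aD i)) (Coalgebra.comul (R := k) c)))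
      = ∑ i, aB i ⊗ₜ[k] rTensor C (cointAt φc (aD i)) (Coalgebra.comul (R := k) c))
    (actM : M ⊗[k] A →ₗ[k] M) (actN : N ⊗[k] A →ₗ[k] N) (g : M →ₗ[k] N) :
    cointAvgOnTensor n aB aD φc (twistedAct E actM) (twistedAct E actN) (rTensor C g)
        ∘ₗ (TensorProduct.assoc k M C C).symm.toLinearMap
        ∘ₗ lTensor M (Coalgebra.comul (R := k) (A := C))
      = rTensor C (cointAvgOnTensor n aB aD φc actM actN g)
        ∘ₗ (TensorProduct.assoc k M C C).symm.toLinearMap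
        ∘ₗ lTensor M (Coalgebra.comul (R := k) (A := C)) := by
  refine TensorProduct.ext' fun m c => ?_
  have h₁ := LinearMap.congr_fun
    (cointAvgOnTensor_twistedAct_comp_assoc_symm_mk (aB := aB) (aD := aD) (φc := φc)
      E actM actN g m)
    (Coalgebra.comul c)
  have h₂ := LinearMap.congr_fun
    (rTensor_cointAvgOnTensor_comp_assoc_symm_mk (aB := aB) (aD := aD) (φc := φc) actM actN g m)
    (Coalgebra.comul c)
  simp only [coe_comp, Function.comp_apply, LinearEquiv.coe_coe, TensorProduct.mk_apply,
    LinearMap.sum_apply] at h₁ h₂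
  simp only [coe_comp, Function.comp_apply, LinearEquiv.coe_coe, lTensor_tmul]
  rw [h₁, h₂]
  simp only [twistedAct, coe_comp, Function.comp_apply, LinearEquiv.coe_coe, ← map_sum, hφ]

end Averaging

theorem cointAvg_is_entwinedHom (E : Entwining k A C)
    (n : ℕ) (aB : Fin n → A) (aD : Fin n → Module.Dual k A)
    (φc : Module.Dual k A ⊗[k] C →ₗ[k] A)
    (hφ : IsNormalisedCointegralMap E n aB aD φc)
    (M N : Type*) [AddCommGroup M] [Module k M] [AddCommGroup N] [Module k N]
    (actM : M ⊗[k] A →ₗ[k] M) (coactM : M →ₗ[k] M ⊗[k] C)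
    (actN : N ⊗[k] A →ₗ[k] N) (coactN : N →ₗ[k] N ⊗[k] C)
    (hM : IsEntwinedModule E actM coactM) (hN : IsEntwinedModule E actN coactN)
    (g : M →ₗ[k] N) (hg : coactN ∘ₗ g = rTensor C g ∘ₗ coactM) :
    IsEntwinedHom actM coactM actN coactN
      (cointAvg n aB aD φc actM coactM actN g) := by
  obtain ⟨hφ₁, hφ₂, -⟩ := hφ
  set G := cointAvgOnTensor n aB aD φc actM actN g
  set G' := cointAvgOnTensor n aB aD φc (twistedAct E actM) (twistedAct E actN) (rTensor C g)
  have hcoassoc := hM.2.1.2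
  rw [cointAvg_eq_comp]
  refine ⟨?_, ?_⟩
  · rw [comp_assoc, hM.coact_comp_act, ← comp_assoc,
      cointAvgOnTensor_comp_twistedAct E hM.1 hN.1 g hφ₂, comp_assoc, ← rTensor_comp]
  · calc coactN ∘ₗ G ∘ₗ coactM
        = G' ∘ₗ rTensor C coactM ∘ₗ coactM := by
          rw [← comp_assoc,
            cointAvgOnTensor_naturality hM.coact_comp_act hN.coact_comp_act hg.symm]
          rfl
      _ = (G' ∘ₗ (TensorProduct.assoc k M C C).symm.toLinearMap
            ∘ₗ lTensor M (Coalgebra.comul (R := k) (A := C))) ∘ₗ coactM := by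
          rw [hcoassoc]; rfl
      _ = (rTensor C G ∘ₗ (TensorProduct.assoc k M C C).symm.toLinearMap
            ∘ₗ lTensor M (Coalgebra.comul (R := k) (A := C))) ∘ₗ coactM := by
          rw [cointAvgOnTensor_twistedAct_comp_comul E hφ₁]
      _ = rTensor C G ∘ₗ rTensor C coactM ∘ₗ coactM := by
          rw [hcoassoc]; rfl
      _ = rTensor C (G ∘ₗ coactM) ∘ₗ coactM := by
          rw [rTensor_comp]; rfl
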